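/- Let d ≥ 1 and p ≥ 0 be integers and let C₀ > 0. There exists a constant C = C(d,p,C₀) such that for every h > 0, every axis-parallel closed cube T ⊂ ℝ^d of side length h, every Borel set Γ ⊆ T whose (d−1)-dimensional Hausdorff measure satisfies H^{d−1}(Γ) ≤ C₀ h^{d−1}, and every polynomial q on ℝ^d of degree at most p in each variable, one has h ∫_Γ ‖∇q(x)‖² dH^{d−1}(x) ≤ C ∫_T ‖∇q(x)‖² dx. -/

import Mathlib

open MeasureTheory

noncomputable section

/-- The axis-parallel closed cube in `ℝ^d` with lower corner `a` and side length `h`. -/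
def cube (d : ℕ) (h : ℝ) (a : EuclideanSpace ℝ (Fin d)) : Set (EuclideanSpace ℝ (Fin d)) :=
  {x | ∀ i, a i ≤ x i ∧ x i ≤ a i + h}

/-- `q : ℝ^d → ℝ` is a polynomial function of degree at most `p` in each variable. -/
def IsQp (d p : ℕ) (q : EuclideanSpace ℝ (Fin d) → ℝ) : Prop :=
  ∃ P : MvPolynomial (Fin d) ℝ, (∀ i, P.degreeOf i ≤ p) ∧
    ∀ x : EuclideanSpace ℝ (Fin d), q x = MvPolynomial.eval (fun i => x i) P

/-!
On the unit cube `K`, a nonzero polynomial cannot vanish on the interior, so `r ↦ ‖r‖_{L²(K)}` is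
a norm on the finite-dimensional space `ℚ_p`; by compactness of its unit sphere it dominates the
sup norm on `K`: `sup_K r² ≤ C ∫_K r²`. The space `ℚ_p` is invariant under `x ↦ a + h x` and under
partial derivatives, so rescaling gives `h^d ‖∇q(x)‖² ≤ C ∫_T ‖∇q‖²` for every `x ∈ T`.
Integrating this over `Γ` and using `H^{d-1}(Γ) ≤ C₀ h^{d-1}` gives the inequality.
-/

section

variable {X : Type*} [TopologicalSpace X] [MeasurableSpace X] [OpensMeasurableSpace X]
  {μ : Measure X} {K : Set X}

theorem exists_sq_le_mul_setIntegral_sq_of_linearMap [IsLocallyFiniteMeasure μ]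
    {E : Type*} [NormedAddCommGroup E] [NormedSpace ℝ E] [FiniteDimensional ℝ E]
    (hK : IsCompact K) (F : E →ₗ[ℝ] X → ℝ) (hF : Continuous fun c : E × X => F c.1 c.2)
    (hpos : ∀ c ≠ 0, 0 < ∫ x in K, F c x ^ 2 ∂μ) :
    ∃ C, 0 < C ∧ ∀ c, ∀ x ∈ K, F c x ^ 2 ≤ C * ∫ y in K, F c y ^ 2 ∂μ := by
  set ψ : E → ℝ := fun c => ∫ y in K, F c y ^ 2 ∂μ
  have hψ : Continuous ψ := continuous_parametric_integral_of_continuous (hF.pow 2) hK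
  have hS : ∀ c ∈ Metric.sphere (0 : E) 1, 0 < ψ c := fun c hc =>
    hpos c (by rintro rfl; simp at hc)
  -- `F c x ^ 2 / ψ c` is homogeneous of degree zero in `c`: bound it on `sphere 0 1 ×ˢ K`
  obtain ⟨M, hM⟩ := ((isCompact_sphere (0 : E) 1).prod hK).bddAbove_image
    (f := fun c : E × X => F c.1 c.2 ^ 2 / ψ c.1) <|
      (hF.pow 2).continuousOn.div (hψ.comp continuous_fst).continuousOn
        fun c hc => (hS c.1 hc.1).ne'
  refine ⟨max M 1, by positivity, fun c x hx => ?_⟩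
  rcases eq_or_ne c 0 with rfl | hc
  · simp
  obtain ⟨r, u, hu, rfl⟩ : ∃ r : ℝ, ∃ u ∈ Metric.sphere (0 : E) 1, c = r • u :=
    ⟨‖c‖, ‖c‖⁻¹ • c, by simp [norm_smul, hc], by simp [smul_smul, hc]⟩
  have hψu : r ^ 2 * ψ u = ψ (r • u) := by
    simp only [ψ, map_smul, Pi.smul_apply, smul_eq_mul, mul_pow, integral_const_mul]
  have hux : F u x ^ 2 ≤ M * ψ u := (div_le_iff₀ (hS u hu)).mp (hM ⟨(u, x), ⟨hu, hx⟩, rfl⟩)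
  calc F (r • u) x ^ 2 = r ^ 2 * F u x ^ 2 := by simp [mul_pow]
    _ ≤ r ^ 2 * (M * ψ u) := by gcongr
    _ = M * ψ (r • u) := by rw [← hψu]; ring
    _ ≤ max M 1 * ψ (r • u) := by
        refine mul_le_mul_of_nonneg_right (le_max_left _ _) ?_
        exact hψu ▸ mul_nonneg (sq_nonneg r) (hS u hu).le

theorem Submodule.exists_sq_le_mul_setIntegral_sq [IsLocallyFiniteMeasure μ]
    (V : Submodule ℝ (X → ℝ)) [FiniteDimensional ℝ V] (hK : IsCompact K)
    (hcont : ∀ f ∈ V, Continuous f) (hpos : ∀ f ∈ V, f ≠ 0 → 0 < ∫ x in K, f x ^ 2 ∂μ) :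
    ∃ C, 0 < C ∧ ∀ f ∈ V, ∀ x ∈ K, f x ^ 2 ≤ C * ∫ y in K, f y ^ 2 ∂μ := by
  let b := Module.finBasis ℝ V
  let F := V.subtype ∘ₗ b.equivFun.symm.toLinearMap
  have hF_apply (c : Fin _ → ℝ) (x : X) : F c x = ∑ i, c i * (b i : X → ℝ) x := by
    simp [F, Module.Basis.equivFun_symm_apply]
  have hF : Continuous fun c : (Fin _ → ℝ) × X => F c.1 c.2 := by
    simp only [hF_apply]
    exact continuous_finsetSum _ fun i _ =>
      (continuous_apply i).comp continuous_fst |>.mul <| (hcont _ (b i).2).comp continuous_snd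
  have hF_inj : Function.Injective F := V.injective_subtype.comp b.equivFun.symm.injective
  obtain ⟨C, hC, hbound⟩ := exists_sq_le_mul_setIntegral_sq_of_linearMap hK F hF fun c hc =>
    hpos _ (b.equivFun.symm c).2 ((map_ne_zero_iff F hF_inj).mpr hc)
  refine ⟨C, hC, fun f hf x hx => ?_⟩
  simpa [F] using hbound (b.equivFun ⟨f, hf⟩) x hx

theorem setIntegral_sq_pos_of_mem_interior [T2Space X] [μ.IsOpenPosMeasure]
    [IsFiniteMeasureOnCompacts μ] (hK : IsCompact K) {f : X → ℝ} (hf : Continuous f) {x : X}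
    (hx : x ∈ interior K) (hfx : f x ≠ 0) : 0 < ∫ y in K, f y ^ 2 ∂μ := by
  rw [setIntegral_pos_iff_support_of_nonneg_ae (ae_of_all _ fun _ => sq_nonneg _)
    ((hf.pow 2).continuousOn.integrableOn_compact hK)]
  refine (IsOpen.measure_pos μ ((hf.pow 2).isOpen_support.inter isOpen_interior)
    ⟨x, by simpa using hfx, hx⟩).trans_le (measure_mono ?_)
  exact Set.inter_subset_inter_right _ interior_subset

end

namespace MvPolynomial

variable {σ R : Type*} [CommSemiring R] {n : ℕ} {P : MvPolynomial σ R}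

theorem mem_restrictDegree_iff_degreeOf_le :
    P ∈ restrictDegree σ R n ↔ ∀ i, P.degreeOf i ≤ n := by
  simp only [mem_restrictDegree, degreeOf_le_iff]
  exact ⟨fun h i m hm => h m hm i, fun h m hm i => h i m hm⟩

theorem pderiv_mem_restrictDegree (hP : P ∈ restrictDegree σ R n) (i : σ) :
    pderiv i P ∈ restrictDegree σ R n := by
  suffices (restrictDegree σ R n).map (pderiv i).toLinearMap ≤ restrictDegree σ R n from
    this ⟨P, hP, rfl⟩
  rw [restrictDegree, restrictSupport_eq_span, Submodule.map_span_le]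
  rintro _ ⟨m, hm, rfl⟩
  rw [← restrictSupport_eq_span, Derivation.coeFn_coe, pderiv_monomial,
    monomial_mem_restrictSupport]
  exact Or.inl fun j => (Nat.sub_le _ _).trans (hm j)

theorem bind₁_mem_restrictDegree [DecidableEq σ] {g : σ → MvPolynomial σ R}
    (hg : ∀ i j, (g i).degreeOf j ≤ if j = i then 1 else 0) (hP : P ∈ restrictDegree σ R n) :
    bind₁ g P ∈ restrictDegree σ R n := by
  rw [mem_restrictDegree_iff_degreeOf_le] at hP ⊢
  intro j
  conv_lhs => rw [P.as_sum]
  simp only [map_sum, bind₁_monomial]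
  refine (degreeOf_sum_le _ _ _).trans (Finset.sup_le fun m hm => ?_)
  refine (degreeOf_C_mul_le _ _ _).trans <| (degreeOf_prod_le _ _ _).trans ?_
  calc ∑ i ∈ m.support, (g i ^ m i).degreeOf j
      ≤ ∑ i ∈ m.support, if j = i then m j else 0 := by
        refine Finset.sum_le_sum fun i _ => (degreeOf_pow_le _ _ _).trans ?_
        have := hg i j
        split_ifs at this ⊢ with hij
        · subst hij; simpa using Nat.mul_le_mul_left (m j) this
        · simp_all
    _ ≤ m j := by rw [Finset.sum_ite_eq]; split_ifs <;> simp
    _ ≤ n := degreeOf_le_iff.mp (hP j) m hm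

end MvPolynomial

open MvPolynomial

section

variable {ι : Type*}

def polyFun : MvPolynomial ι ℝ →ₗ[ℝ] EuclideanSpace ℝ ι → ℝ :=
  LinearMap.funLeft ℝ ℝ WithLp.ofLp ∘ₗ evalₗ ℝ ι

theorem polyFun_apply (P : MvPolynomial ι ℝ) (x : EuclideanSpace ℝ ι) :
    polyFun P x = eval (fun i => x i) P := rfl

theorem continuous_polyFun (P : MvPolynomial ι ℝ) : Continuous (polyFun P) :=
  (continuous_eval P).comp (PiLp.continuous_ofLp 2 _)

theorem analyticOnNhd_polyFun [Fintype ι] (P : MvPolynomial ι ℝ) :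
    AnalyticOnNhd ℝ (polyFun P) Set.univ := by
  exact AnalyticOnNhd.eval_continuousLinearMap' (fun i => EuclideanSpace.proj (𝕜 := ℝ) i) P

theorem hasFDerivAt_polyFun [Fintype ι] (P : MvPolynomial ι ℝ) (x : EuclideanSpace ℝ ι) :
    HasFDerivAt (polyFun P) (∑ i, polyFun (pderiv i P) x • EuclideanSpace.proj (𝕜 := ℝ) i) x := by
  classical
  induction P using MvPolynomial.induction_on with
  | C c =>
    have hC : polyFun (C c : MvPolynomial ι ℝ) = fun _ => c :=
      funext fun _ => by simp [polyFun_apply]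
    simpa [hC] using hasFDerivAt_const (𝕜 := ℝ) c x
  | add P Q hP hQ => simpa [Finset.sum_add_distrib, add_smul] using hP.add hQ
  | mul_X P j hP =>
    have hX : polyFun (P * X j) = polyFun P * ⇑(EuclideanSpace.proj (𝕜 := ℝ) j) :=
      funext fun _ => by simp [polyFun_apply]
    rw [hX]
    refine (hP.mul (EuclideanSpace.proj (𝕜 := ℝ) j).hasFDerivAt).congr_fderiv ?_
    simp [polyFun_apply, pderiv_X, Pi.single_apply, add_smul, Finset.sum_add_distrib,
      Finset.smul_sum, smul_smul, add_comm, apply_ite (eval _), ite_smul]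

theorem EuclideanSpace.norm_sum_smul_proj_sq [Fintype ι] (a : ι → ℝ) :
    ‖∑ i, a i • EuclideanSpace.proj (𝕜 := ℝ) i‖ ^ 2 = ∑ i, a i ^ 2 := by
  have : ∑ i, a i • EuclideanSpace.proj (𝕜 := ℝ) i = innerSL ℝ (WithLp.toLp 2 a) := by
    ext y; simp [PiLp.inner_apply, mul_comm]
  rw [this, innerSL_apply_norm, EuclideanSpace.real_norm_sq_eq]

theorem norm_fderiv_polyFun_sq [Fintype ι] (P : MvPolynomial ι ℝ) (x : EuclideanSpace ℝ ι) :
    ‖fderiv ℝ (polyFun P) x‖ ^ 2 = ∑ i, polyFun (pderiv i P) x ^ 2 := by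
  rw [(hasFDerivAt_polyFun P x).fderiv, EuclideanSpace.norm_sum_smul_proj_sq]

theorem polyFun_add_smul (P : MvPolynomial ι ℝ) (a : EuclideanSpace ℝ ι) (h : ℝ)
    (y : EuclideanSpace ℝ ι) :
    polyFun P (a + h • y) = polyFun (bind₁ (fun i => C (a i) + C h * X i) P) y := by
  change eval₂Hom (RingHom.id ℝ) _ P = eval₂Hom (RingHom.id ℝ) _ (bind₁ _ P)
  rw [eval₂Hom_bind₁]
  congr
  funext i
  simp

theorem setIntegral_polyFun_sq_pos [Fintype ι] {P : MvPolynomial ι ℝ} (hP : polyFun P ≠ 0)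
    {K : Set (EuclideanSpace ℝ ι)} (hK : IsCompact K) (hK' : (interior K).Nonempty) :
    0 < ∫ x in K, polyFun P x ^ 2 := by
  obtain ⟨z, hz⟩ := hK'
  obtain ⟨x, hxK, hx⟩ : ∃ x ∈ interior K, polyFun P x ≠ 0 := by
    by_contra! h0
    exact hP <| funext fun y =>
      (analyticOnNhd_polyFun P).eqOn_zero_of_preconnected_of_eventuallyEq_zero isPreconnected_univ
        (Set.mem_univ z) (Filter.eventuallyEq_of_mem (isOpen_interior.mem_nhds hz) h0)
        (Set.mem_univ y)
  exact setIntegral_sq_pos_of_mem_interior hK (continuous_polyFun P) hxK hx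

end

def Qp (ι : Type*) (p : ℕ) : Submodule ℝ (EuclideanSpace ℝ ι → ℝ) :=
  (restrictDegree ι ℝ p).map polyFun

instance (ι : Type*) [Finite ι] (p : ℕ) : FiniteDimensional ℝ (Qp ι p) := by
  unfold Qp
  infer_instance

section

variable {d : ℕ}

theorem isCompact_cube (h : ℝ) (a : EuclideanSpace ℝ (Fin d)) : IsCompact (cube d h a) := by
  have : cube d h a = WithLp.ofLp ⁻¹' Set.Icc a.ofLp (a.ofLp + fun _ => h) := by
    ext x
    simp [cube, Set.mem_Icc, Pi.le_def, forall_and]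
  rw [this]
  exact (PiLp.homeomorph 2 _).isCompact_preimage.mpr isCompact_Icc

theorem nonempty_interior_cube_one_zero :
    (interior (cube d 1 (0 : EuclideanSpace ℝ (Fin d)))).Nonempty := by
  let c : EuclideanSpace ℝ (Fin d) := WithLp.toLp 2 fun _ => 1 / 2
  refine ⟨c, mem_interior.mpr ⟨Metric.ball c (1 / 2), fun x hx i => ?_, Metric.isOpen_ball,
    Metric.mem_ball_self (by norm_num)⟩⟩
  have := (PiLp.norm_apply_le (x - c) i).trans_lt (mem_ball_iff_norm.mp hx)
  simp only [PiLp.sub_apply, Real.norm_eq_abs, abs_lt, c] at this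
  simp only [PiLp.zero_apply, zero_add]
  constructor <;> linarith

theorem image_add_smul_cube_one_zero {h : ℝ} (hh : 0 < h) (a : EuclideanSpace ℝ (Fin d)) :
    (fun y => a + h • y) '' cube d 1 0 = cube d h a := by
  ext x
  constructor
  · rintro ⟨y, hy, rfl⟩ i
    have := hy i
    simp only [PiLp.zero_apply, zero_add] at this
    simp only [PiLp.add_apply, PiLp.smul_apply, smul_eq_mul]
    constructor <;> nlinarith
  · intro hx
    refine ⟨h⁻¹ • (x - a), fun i => ?_, by simp [smul_smul, hh.ne']⟩
    have := hx i
    simp only [PiLp.zero_apply, zero_add, PiLp.smul_apply, PiLp.sub_apply, smul_eq_mul]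
    constructor
    · exact mul_nonneg (inv_nonneg.mpr hh.le) (by linarith)
    · rw [inv_mul_le_one₀ hh]; linarith

theorem setIntegral_cube_eq_pow_mul {h : ℝ} (hh : 0 < h) (a : EuclideanSpace ℝ (Fin d))
    (f : EuclideanSpace ℝ (Fin d) → ℝ) :
    ∫ x in cube d h a, f x = h ^ d * ∫ y in cube d 1 0, f (a + h • y) := by
  have hf (y : EuclideanSpace ℝ (Fin d)) :
      HasFDerivAt (fun y => a + h • y) (h • ContinuousLinearMap.id ℝ _) y :=
    ((hasFDerivAt_id y).const_smul h).const_add a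
  rw [← image_add_smul_cube_one_zero hh a, integral_image_eq_integral_abs_det_fderiv_smul volume
    (isCompact_cube 1 0).isClosed.measurableSet (fun y _ => (hf y).hasFDerivWithinAt)
    ((add_right_injective a).comp (smul_right_injective _ hh.ne')).injOn f,
    ← integral_const_mul]
  simp [ContinuousLinearMap.det, LinearMap.det_smul, abs_of_pos hh]

end

theorem exists_pow_mul_sq_le_mul_setIntegral_cube (d p : ℕ) :
    ∃ C, 0 < C ∧ ∀ h, 0 < h → ∀ a, ∀ P ∈ restrictDegree (Fin d) ℝ p, ∀ x ∈ cube d h a,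
      h ^ d * polyFun P x ^ 2 ≤ C * ∫ y in cube d h a, polyFun P y ^ 2 := by
  have hcont : ∀ f ∈ Qp (Fin d) p, Continuous f := by
    rintro _ ⟨P, -, rfl⟩
    exact continuous_polyFun P
  have hpos : ∀ f ∈ Qp (Fin d) p, f ≠ 0 → 0 < ∫ x in cube d 1 0, f x ^ 2 := by
    rintro _ ⟨P, -, rfl⟩ hP
    exact setIntegral_polyFun_sq_pos hP (isCompact_cube 1 0) nonempty_interior_cube_one_zero
  obtain ⟨C, hC, hbound⟩ :=
    (Qp (Fin d) p).exists_sq_le_mul_setIntegral_sq (isCompact_cube 1 0) hcont hpos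
  refine ⟨C, hC, fun h hh a P hP x hx => ?_⟩
  rw [← image_add_smul_cube_one_zero hh a] at hx
  obtain ⟨y, hy, rfl⟩ := hx
  have hg (i j : Fin d) : (MvPolynomial.C (a i) + MvPolynomial.C h * X i).degreeOf j ≤
      if j = i then 1 else 0 :=
    (degreeOf_add_le _ _ _).trans <| max_le ((degreeOf_C _ _).trans_le (Nat.zero_le _)) <|
      (degreeOf_C_mul_le _ _ _).trans (degreeOf_X j i).le
  have hP' := bind₁_mem_restrictDegree hg hP
  rw [setIntegral_cube_eq_pow_mul hh a]
  simp only [polyFun_add_smul]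
  calc h ^ d * _ ≤ h ^ d * (C * _) := by gcongr; exact hbound _ ⟨_, hP', rfl⟩ y hy
    _ = _ := by ring

theorem exists_pow_mul_norm_fderiv_sq_le_mul_setIntegral_cube (d p : ℕ) :
    ∃ C, 0 < C ∧ ∀ h, 0 < h → ∀ a, ∀ q, IsQp d p q → ∀ x ∈ cube d h a,
      h ^ d * ‖fderiv ℝ q x‖ ^ 2 ≤ C * ∫ y in cube d h a, ‖fderiv ℝ q y‖ ^ 2 := by
  obtain ⟨C, hC, hbound⟩ := exists_pow_mul_sq_le_mul_setIntegral_cube d p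
  refine ⟨C, hC, fun h hh a q ⟨P, hdeg, hq⟩ x hx => ?_⟩
  obtain rfl : q = polyFun P := funext hq
  have hP := mem_restrictDegree_iff_degreeOf_le.mpr hdeg
  simp only [norm_fderiv_polyFun_sq]
  rw [integral_finsetSum (f := fun i y => polyFun (pderiv i P) y ^ 2) _ fun i _ =>
    ((continuous_polyFun _).pow 2).continuousOn.integrableOn_compact (isCompact_cube h a),
    Finset.mul_sum, Finset.mul_sum]
  exact Finset.sum_le_sum fun i _ => hbound h hh a _ (pderiv_mem_restrictDegree hP i) x hx

/-- Elementwise boundary inverse inequality: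
`h ∫_Γ ‖∇q‖² dH^{d-1} ≤ C ∫_T ‖∇q‖² dx` whenever `Γ ⊆ T` has
`(d-1)`-dimensional Hausdorff measure at most `C₀ h^{d-1}`. -/
theorem statement3 (d p : ℕ) (hd : 1 ≤ d) (C₀ : ℝ) (hC₀ : 0 < C₀) :
    ∃ C : ℝ, 0 < C ∧ ∀ h : ℝ, 0 < h → ∀ a : EuclideanSpace ℝ (Fin d),
      ∀ Γ : Set (EuclideanSpace ℝ (Fin d)), MeasurableSet Γ → Γ ⊆ cube d h a →
        μH[((d : ℝ) - 1)] Γ ≤ ENNReal.ofReal (C₀ * h ^ (d - 1)) →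
        ∀ q : EuclideanSpace ℝ (Fin d) → ℝ, IsQp d p q →
          h * ∫ x in Γ, ‖fderiv ℝ q x‖ ^ 2 ∂μH[((d : ℝ) - 1)] ≤
            C * ∫ x in cube d h a, ‖fderiv ℝ q x‖ ^ 2 := by
  obtain ⟨C, hC, hbound⟩ := exists_pow_mul_norm_fderiv_sq_le_mul_setIntegral_cube d p
  refine ⟨C * C₀, by positivity, fun h hh a Γ _ hΓT hΓμ q hq => ?_⟩
  set I := ∫ x in cube d h a, ‖fderiv ℝ q x‖ ^ 2
  have hI : 0 ≤ I := setIntegral_nonneg (isCompact_cube h a).isClosed.measurableSet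
    fun _ _ => sq_nonneg _
  have hpow : h ^ d = h * h ^ (d - 1) := by rw [← pow_succ']; congr; omega
  have hsup : ∀ x ∈ Γ, ‖‖fderiv ℝ q x‖ ^ 2‖ ≤ C * I / h ^ d := fun x hx => by
    rw [Real.norm_of_nonneg (sq_nonneg _), le_div_iff₀ (by positivity), mul_comm]
    exact hbound h hh a q hq x (hΓT hx)
  calc h * ∫ x in Γ, ‖fderiv ℝ q x‖ ^ 2 ∂μH[((d : ℝ) - 1)]
      ≤ h * (C * I / h ^ d * (μH[((d : ℝ) - 1)] Γ).toReal) := by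
        gcongr
        exact (le_abs_self _).trans <|
          norm_setIntegral_le_of_norm_le_const (hΓμ.trans_lt ENNReal.ofReal_lt_top) hsup
    _ ≤ h * (C * I / h ^ d * (C₀ * h ^ (d - 1))) := by
        gcongr
        exact ENNReal.toReal_le_of_le_ofReal (by positivity) hΓμ
    _ = C * C₀ * I := by
        rw [hpow]
        field_simp
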